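/- The subgroup $M$ of $\mathbb{Q}^\omega$ consisting of sequences all but finitely many of whose components lie in $\mathbb{Z}$ is not a divisible group; hence $M$ is not an injective $\mathbb{Z}$-module, even though it is an inverse limit of a countable system of injective $\mathbb{Z}$-modules with surjective transition maps. -/

import Mathlib

universe u v

/-- The first uncountable ordinal `ω₁`, as a linearly ordered index type. -/
def Omega1 : Type 1 := {o : Ordinal.{0} // o < (Cardinal.aleph 1).ord}

noncomputable instance : LinearOrder Omega1 := by unfold Omega1; infer_instance

/-- The inverse limit of an inverse system of modules, realized as the submodule of the
direct product consisting of the compatible families. -/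
def invLim {R : Type u} [Ring R] {ι : Type v} [Preorder ι] (P : ι → Type u)
    [∀ i, AddCommGroup (P i)] [∀ i, Module R (P i)]
    (φ : ∀ i j : ι, i ≤ j → (P j →ₗ[R] P i)) : Submodule R (∀ i, P i) where
  carrier := {x | ∀ (i j : ι) (h : i ≤ j), φ i j h (x j) = x i}
  zero_mem' := by intro i j h; simp
  add_mem' := by intro a b ha hb i j h; simp [ha i j h, hb i j h]
  smul_mem' := by intro c a ha i j h; simp [ha i j h]

/-- The subgroup of `ℚ^ω` of sequences all but finitely many of whose components are
integers. -/
def Msub : AddSubgroup (ℕ → ℚ) where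
  carrier := {x | {i | x i ∉ Set.range ((↑) : ℤ → ℚ)}.Finite}
  zero_mem' := by
    refine Set.finite_empty.subset ?_
    intro i hi
    exact hi ⟨0, by simp⟩
  add_mem' := by
    intro x y hx hy
    refine (hx.union hy).subset ?_
    intro i hi
    by_contra hc
    simp only [Set.mem_union, Set.mem_setOf_eq, not_or, not_not] at hc
    obtain ⟨⟨k, hk⟩, ⟨l, hl⟩⟩ := hc
    refine hi ⟨k + l, ?_⟩
    show ((k + l : ℤ) : ℚ) = x i + y i
    rw [Int.cast_add, hk, hl]
  neg_mem' := by
    intro x hx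
    refine hx.subset ?_
    intro i hi
    by_contra hc
    simp only [Set.mem_setOf_eq, not_not] at hc
    obtain ⟨k, hk⟩ := hc
    refine hi ⟨-k, ?_⟩
    show ((-k : ℤ) : ℚ) = -(x i)
    rw [Int.cast_neg, hk]

/-!
Halving the constant sequence `1` would require all coordinates to be `1/2`, so `M` is not
divisible, and an injective `ℤ`-module is divisible. For the inverse system, let `Tₙ ≤ M`
(`intTail n`) be the integer sequences vanishing below `n`; then `M ⧸ Tₙ ≅ ℚⁿ × ⨁_{i ≥ n} ℚ/ℤ`
is divisible, the maps `M ⧸ Tₙ → M ⧸ Tₘ` are quotient maps, and `M ≅ lim M ⧸ Tₙ`: the `Tₙ` meet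
in `0`, and a compatible family of lifts `xⁿ` has the diagonal `i ↦ xⁱ⁺¹ᵢ` as its limit.
-/

open Function

theorem Module.Injective.zsmul_surjective {A : Type*} [AddCommGroup A] [Module.Injective ℤ A]
    {k : ℤ} (hk : k ≠ 0) : Surjective fun a : A => k • a := by
  intro a
  obtain ⟨g, hg⟩ := Module.Injective.extension_property ℤ A ℤ ℤ
    (LinearMap.toSpanSingleton ℤ ℤ k) (fun _ _ h => mul_right_cancel₀ hk h)
    (LinearMap.toSpanSingleton ℤ A a)
  refine ⟨g 1, ?_⟩
  simpa [← map_zsmul] using LinearMap.congr_fun hg 1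

theorem Module.injective_of_zsmul_surjective {A : Type*} [AddCommGroup A]
    (h : ∀ k : ℤ, k ≠ 0 → Surjective fun a : A => k • a) : Module.Injective ℤ A :=
  letI := divisibleByOfSMulRightSurj A ℤ fun hk => h _ hk
  (Module.Baer.of_divisible A).injective

namespace Msub

theorem mem_iff {x : ℕ → ℚ} : x ∈ Msub ↔ {i | x i ∉ Set.range ((↑) : ℤ → ℚ)}.Finite := Iff.rfl

theorem not_surjective_two_zsmul : ¬ Surjective fun x : Msub => (2 : ℤ) • x := by
  intro h
  obtain ⟨z, hz⟩ := h ⟨1, mem_iff.2 <| Set.finite_empty.subset fun _ hi => hi ⟨1, Int.cast_one⟩⟩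
  have hhalf : ∀ i, (z : ℕ → ℚ) i = 1 / 2 := fun i => by
    have := congrFun (congrArg Subtype.val hz) i
    simp only [AddSubgroup.coe_zsmul, Pi.smul_apply, zsmul_eq_mul, Pi.one_apply] at this
    push_cast at this
    linarith
  refine Set.infinite_univ (mem_iff.1 z.2 |>.subset fun i _ => ?_)
  rintro ⟨k, hk⟩
  rw [hhalf] at hk
  have : (2 * k : ℚ) = 1 := by rw [hk]; norm_num
  exact absurd (by exact_mod_cast this : 2 * k = 1) (by omega)

def intTail (n : ℕ) : AddSubgroup (ℕ → ℚ) :=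
  AddSubgroup.pi {i | i < n} (fun _ => ⊥) ⊓
    AddSubgroup.pi Set.univ fun _ => (Int.castAddHom ℚ).range

theorem mem_intTail {n : ℕ} {x : ℕ → ℚ} :
    x ∈ intTail n ↔ (∀ i < n, x i = 0) ∧ ∀ i, x i ∈ Set.range ((↑) : ℤ → ℚ) := by
  simp only [intTail, AddSubgroup.mem_inf, AddSubgroup.mem_pi, AddSubgroup.mem_bot,
    AddMonoidHom.mem_range, Int.coe_castAddHom, Set.mem_univ, forall_const, Set.mem_range]
  rfl

theorem intTail_antitone : Antitone intTail := fun _ _ h _ hx =>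
  mem_intTail.2 ⟨fun i hi => (mem_intTail.1 hx).1 i (hi.trans_le h), (mem_intTail.1 hx).2⟩

theorem intTail_le_Msub (n : ℕ) : intTail n ≤ Msub := fun _ hx =>
  mem_iff.2 <| Set.finite_empty.subset fun i hi => hi ((mem_intTail.1 hx).2 i)

abbrev tailQuot (n : ℕ) : Type := Msub ⧸ (intTail n).addSubgroupOf Msub

theorem tailQuot_mk_eq_mk_iff {n : ℕ} {x y : Msub} :
    (x : tailQuot n) = y ↔ (x - y : ℕ → ℚ) ∈ intTail n :=
  QuotientAddGroup.eq_iff_sub_mem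

def tailQuotMap (m n : ℕ) (h : m ≤ n) : tailQuot n →ₗ[ℤ] tailQuot m :=
  (QuotientAddGroup.map _ _ (AddMonoidHom.id Msub) fun _ hx => intTail_antitone h hx).toIntLinearMap

theorem tailQuotMap_id (n : ℕ) : tailQuotMap n n le_rfl = LinearMap.id :=
  LinearMap.ext fun x => QuotientAddGroup.induction_on x fun _ => rfl

theorem tailQuotMap_comp {m n p : ℕ} (hmn : m ≤ n) (hnp : n ≤ p) :
    (tailQuotMap m n hmn).comp (tailQuotMap n p hnp) = tailQuotMap m p (hmn.trans hnp) :=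
  LinearMap.ext fun x => QuotientAddGroup.induction_on x fun _ => rfl

theorem tailQuotMap_surjective {m n : ℕ} (h : m ≤ n) : Surjective (tailQuotMap m n h) :=
  fun y => QuotientAddGroup.induction_on y fun x => ⟨x, rfl⟩

theorem tailQuot_zsmul_surjective (n : ℕ) {k : ℤ} (hk : k ≠ 0) :
    Surjective fun a : tailQuot n => k • a := by
  classical
  intro a
  obtain ⟨y, rfl⟩ := QuotientAddGroup.mk_surjective a
  -- at the remaining coordinates `y` is an integer beyond `n`, so `0` works there modulo `Tₙ`
  set z : ℕ → ℚ := fun i =>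
    if i < n ∨ (y : ℕ → ℚ) i ∉ Set.range ((↑) : ℤ → ℚ) then (y : ℕ → ℚ) i / k else 0
  have hz : z ∈ Msub :=
    mem_iff.2 <| ((Set.finite_Iio n).union (mem_iff.1 y.2)).subset fun i hi => by
    by_contra hc
    exact hi ⟨0, by rw [Int.cast_zero]; exact (if_neg hc).symm⟩
  have hk' : (k : ℚ) ≠ 0 := Int.cast_ne_zero.2 hk
  refine ⟨(⟨z, hz⟩ : Msub), ?_⟩
  change k • (_ : tailQuot n) = _
  rw [← QuotientAddGroup.mk_zsmul, eq_comm, tailQuot_mk_eq_mk_iff, mem_intTail]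
  have hcoord : ∀ i, (y : ℕ → ℚ) i - k • z i =
      if i < n ∨ (y : ℕ → ℚ) i ∉ Set.range ((↑) : ℤ → ℚ) then 0 else (y : ℕ → ℚ) i := by
    intro i
    simp only [z, zsmul_eq_mul]
    split_ifs
    · rw [mul_div_cancel₀ _ hk', sub_self]
    · rw [mul_zero, sub_zero]
  simp only [AddSubgroup.coe_zsmul, Pi.sub_apply, Pi.smul_apply, hcoord]
  refine ⟨fun i hi => if_pos (Or.inl hi), fun i => ?_⟩
  split_ifs with hc
  · exact ⟨0, Int.cast_zero⟩
  · exact not_not.1 (not_or.1 hc).2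

theorem tailQuot_injective (n : ℕ) : Module.Injective ℤ (tailQuot n) :=
  Module.injective_of_zsmul_surjective fun _ hk => tailQuot_zsmul_surjective n hk

def toInvLim : Msub →ₗ[ℤ] invLim tailQuot tailQuotMap :=
  LinearMap.codRestrict _
    (LinearMap.pi fun n => (QuotientAddGroup.mk' ((intTail n).addSubgroupOf Msub)).toIntLinearMap)
    fun _ _ _ _ => rfl

theorem toInvLim_injective : Injective toInvLim := by
  refine (injective_iff_map_eq_zero _).2 fun x hx => Subtype.ext <| funext fun i => ?_
  have hi : (x : tailQuot (i + 1)) = (0 : Msub) := congrFun (congrArg Subtype.val hx) (i + 1)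
  rw [tailQuot_mk_eq_mk_iff] at hi
  simpa using (mem_intTail.1 hi).1 i i.lt_succ_self

theorem diag_sub_mem_intTail {x : ℕ → ℕ → ℚ} (hx : ∀ m n, m ≤ n → x n - x m ∈ intTail m)
    (n : ℕ) : (fun i => x (i + 1) i) - x n ∈ intTail n := by
  refine mem_intTail.2 ⟨fun i hi => ?_, fun i => ?_⟩
  · have := (mem_intTail.1 (hx (i + 1) n hi)).1 i i.lt_succ_self
    rw [Pi.sub_apply, sub_eq_zero] at this
    rw [Pi.sub_apply, this, sub_self]
  · rcases le_total (i + 1) n with h | h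
    · obtain ⟨k, hk⟩ := (mem_intTail.1 (hx _ _ h)).2 i
      exact ⟨-k, by rw [Int.cast_neg, hk, Pi.sub_apply, Pi.sub_apply, neg_sub]⟩
    · exact (mem_intTail.1 (hx _ _ h)).2 i

theorem toInvLim_surjective : Surjective toInvLim := by
  rintro ⟨y, hy⟩
  choose x hx using fun n => QuotientAddGroup.mk_surjective (y n)
  have hcompat : ∀ m n, m ≤ n → (x n : ℕ → ℚ) - x m ∈ intTail m := fun m n h => by
    rw [← tailQuot_mk_eq_mk_iff, hx m, ← hy m n h, ← hx n]
    rfl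
  have hdiag := diag_sub_mem_intTail hcompat
  have hmem : (fun i => (x (i + 1) : ℕ → ℚ) i) ∈ Msub := by
    simpa using Msub.add_mem (x 0).2 (intTail_le_Msub 0 (hdiag 0))
  refine ⟨⟨_, hmem⟩, Subtype.ext <| funext fun n => ?_⟩
  change ((⟨_, hmem⟩ : Msub) : tailQuot n) = y n
  rw [← hx n, tailQuot_mk_eq_mk_iff]
  exact hdiag n

end Msub

/-- The group `M` of sequences of rationals, all but finitely many of whose components
are integers, is not divisible, hence not an injective `ℤ`-module — even though it is the
inverse limit of a countable system of injective `ℤ`-modules with surjective transition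
maps. -/
theorem Msub_not_divisible :
    ¬ (∀ k : ℤ, k ≠ 0 → Function.Surjective (fun x : ↥Msub => k • x)) ∧
    ¬ Module.Injective ℤ ↥Msub ∧
    ∃ (P : ℕ → Type) (_ : ∀ n, AddCommGroup (P n))
      (φ : ∀ m n : ℕ, m ≤ n → (P n →ₗ[ℤ] P m)),
      (∀ n, φ n n le_rfl = LinearMap.id) ∧
      (∀ (m n p : ℕ) (hmn : m ≤ n) (hnp : n ≤ p),
        (φ m n hmn).comp (φ n p hnp) = φ m p (hmn.trans hnp)) ∧
      (∀ n, Module.Injective ℤ (P n)) ∧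
      (∀ (m n : ℕ) (h : m ≤ n), Function.Surjective (φ m n h)) ∧
      Nonempty (↥Msub ≃ₗ[ℤ] ↥(invLim P φ)) := by
  have not_divisible : ¬ ∀ k : ℤ, k ≠ 0 → Surjective fun x : Msub => k • x :=
    fun h => Msub.not_surjective_two_zsmul (h 2 two_ne_zero)
  refine ⟨not_divisible, fun _ => not_divisible fun _ => Module.Injective.zsmul_surjective, ?_⟩
  exact ⟨Msub.tailQuot, inferInstance, Msub.tailQuotMap, Msub.tailQuotMap_id,
    fun _ _ _ => Msub.tailQuotMap_comp, Msub.tailQuot_injective,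
    fun _ _ => Msub.tailQuotMap_surjective,
    ⟨.ofBijective _ ⟨Msub.toInvLim_injective, Msub.toInvLim_surjective⟩⟩⟩
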